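/- Let µ, ν be Borel probability measures on ℝ^d with finite second moments, γ_φ a tangent element at µ and γ_ψ a tangent element at ν. Then W₂(γ_φ, γ_ψ)² ≤ W₂(µ,ν)² + E((µ,γ_φ),(ν,γ_ψ)), where on the left W₂ is the 2-Wasserstein distance on ℝ^d × ℝ^d with its Euclidean norm, and E((µ,γ_φ),(ν,γ_ψ)) is the infimum, over all geodesic paths η from µ to ν and all parallel transports Ψ of γ_φ along η, of d_ν((e₁)_#Ψ, γ_ψ)². -/

import Mathlib

open MeasureTheory
open scoped ENNReal NNReal unitInterval

noncomputable section

abbrev Rd (d : ℕ) := EuclideanSpace ℝ (Fin d)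

abbrev Curves (E : Type*) [TopologicalSpace E] := C(unitInterval, E)

instance (E : Type*) [TopologicalSpace E] : MeasurableSpace (Curves E) := borel _
instance (E : Type*) [TopologicalSpace E] : BorelSpace (Curves E) := ⟨rfl⟩

/-- Evaluation at time `t` of a continuous curve. -/
def ev {E : Type*} [TopologicalSpace E] (t : unitInterval) (f : Curves E) : E := f t

/-- First-component curve of a curve in a product space. -/
def p₁ {E F : Type*} [TopologicalSpace E] [TopologicalSpace F] (ψ : Curves (E × F)) : Curves E :=
  ⟨fun t => (ψ t).1, continuous_fst.comp ψ.continuous⟩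

/-- Finite second moment. -/
def FinSM {E : Type*} [MeasurableSpace E] [NormedAddCommGroup E] (μ : Measure E) : Prop :=
  ∫⁻ x, (‖x‖₊ : ℝ≥0∞) ^ 2 ∂μ < ⊤

/-- A tangent element at `μ`. -/
def IsTangent {E : Type*} [MeasurableSpace E] [NormedAddCommGroup E]
    (μ : Measure E) (γ : Measure (E × E)) : Prop :=
  IsProbabilityMeasure γ ∧ γ.map Prod.fst = μ ∧ FinSM (γ.map Prod.snd)

/-- Parallel transport of a tangent element `γ` along a Lagrangian path `η`. -/
def IsParallelTransport {E : Type*} [TopologicalSpace E] [MeasurableSpace E]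
    (γ : Measure (E × E)) (η : Measure (Curves E)) (Ψ : Measure (Curves (E × E))) : Prop :=
  IsProbabilityMeasure Ψ ∧
  (∀ᵐ ψ ∂Ψ, ∀ t : unitInterval, (ψ t).2 = (ψ 0).2) ∧
  Ψ.map p₁ = η ∧
  Ψ.map (ev 0) = γ

/-- Squared 2-Wasserstein distance between measures on `ℝ^d` (Euclidean cost). -/
def W2sq {d : ℕ} (μ ν : Measure (Rd d)) : ℝ≥0∞ :=
  ⨅ (γ : Measure (Rd d × Rd d)) (_ : γ.map Prod.fst = μ) (_ : γ.map Prod.snd = ν),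
    ∫⁻ p, (‖p.1 - p.2‖₊ : ℝ≥0∞) ^ 2 ∂γ

/-- Squared distance `d_µ(γ, γ')²` between two tangent elements over the same base
measure: infimum of `∫ |z - z'|²` over measures on `ℝ^d × ℝ^d × ℝ^d` whose
`(x,z)`-marginal is `γ` and whose `(x,z')`-marginal is `γ'`. -/
def dsq {d : ℕ} (γ γ' : Measure (Rd d × Rd d)) : ℝ≥0∞ :=
  ⨅ (Θ : Measure (Rd d × Rd d × Rd d))
    (_ : Θ.map (fun p => (p.1, p.2.1)) = γ)
    (_ : Θ.map (fun p => (p.1, p.2.2)) = γ'),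
    ∫⁻ p, (‖p.2.1 - p.2.2‖₊ : ℝ≥0∞) ^ 2 ∂Θ

/-- The affine interpolation curve `t ↦ (1-t)x + ty`. -/
def geodCurve {d : ℕ} (x y : Rd d) : Curves (Rd d) :=
  ⟨fun t => (1 - (t : ℝ)) • x + (t : ℝ) • y, by fun_prop⟩

/-- `η` is a geodesic path from `μ` to `ν`: it is the law of `t ↦ (1-t)X + tY`
for `(X, Y)` an optimal coupling for `W₂(μ, ν)`. -/
def IsGeodesicPath {d : ℕ} (μ ν : Measure (Rd d)) (η : Measure (Curves (Rd d))) : Prop :=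
  ∃ g : Measure (Rd d × Rd d),
    g.map Prod.fst = μ ∧ g.map Prod.snd = ν ∧
    (∫⁻ p, (‖p.1 - p.2‖₊ : ℝ≥0∞) ^ 2 ∂g) = W2sq μ ν ∧
    η = g.map (fun p => geodCurve p.1 p.2)


/-- Squared 2-Wasserstein distance between measures on `ℝ^d × ℝ^d`, where the
latter is endowed with its Euclidean norm. -/
def W2sqProd {d : ℕ} (Γ₁ Γ₂ : Measure (Rd d × Rd d)) : ℝ≥0∞ :=
  ⨅ (γ : Measure ((Rd d × Rd d) × (Rd d × Rd d)))
    (_ : γ.map Prod.fst = Γ₁) (_ : γ.map Prod.snd = Γ₂),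
    ∫⁻ p, ((‖p.1.1 - p.2.1‖₊ : ℝ≥0∞) ^ 2 + (‖p.1.2 - p.2.2‖₊ : ℝ≥0∞) ^ 2) ∂γ

/-- The quantity `E((µ,γφ),(ν,γψ))`: infimum over geodesic paths from `µ` to `ν`
and parallel transports `Ψ` of `γφ` along them of `d_ν((e₁)_#Ψ, γψ)²`. -/
def Ecal {d : ℕ} (μ ν : Measure (Rd d)) (γφ γψ : Measure (Rd d × Rd d)) : ℝ≥0∞ :=
  ⨅ (η : Measure (Curves (Rd d))) (_ : IsGeodesicPath μ ν η)
    (Ψ : Measure (Curves (Rd d × Rd d))) (_ : IsParallelTransport γφ η Ψ),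
    dsq (Ψ.map (ev 1)) γψ


/-!
Let `Ψ` transport `γφ` along a geodesic path from `μ` to `ν` and let `(X₀, X₁, V)` be the start
point, end point and (constant) transported vector of a `Ψ`-random curve, so that `(X₀, V) ∼ γφ`,
`(X₀, X₁)` is an optimal coupling of `μ` and `ν`, and `(X₁, V) ∼ (e₁)_#Ψ`. Given any `Θ` competing
in `d_ν((e₁)_#Ψ, γψ)`, glue it to the law of `(X₀, X₁, V)` along `(X₁, V)` to get `Z'` with
`(X₁, V, Z') ∼ Θ`. Then `((X₀, V), (X₁, Z'))` couples `γφ` with `γψ`, and its cost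
`E|X₀ - X₁|² + E|V - Z'|²` is `W₂(μ, ν)²` plus the cost of `Θ`.
-/

open ProbabilityTheory

theorem MeasureTheory.Measure.exists_gluing_of_fst_eq {α β γ : Type*} [MeasurableSpace α]
    [MeasurableSpace β] [StandardBorelSpace β] [Nonempty β]
    [MeasurableSpace γ] [StandardBorelSpace γ] [Nonempty γ]
    {ρ : Measure (α × β)} {ρ' : Measure (α × γ)} [IsFiniteMeasure ρ] (h : ρ.fst = ρ'.fst) :
    ∃ π : Measure (α × β × γ), π.map (Prod.map id Prod.fst) = ρ ∧
      π.map (Prod.map id Prod.snd) = ρ' := by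
  have : IsFiniteMeasure ρ' := by
    rw [← Measure.isFiniteMeasure_map_iff measurable_fst.aemeasurable, ← Measure.fst, ← h]
    infer_instance
  refine ⟨ρ.fst ⊗ₘ (ρ.condKernel ×ₖ ρ'.condKernel), ?_, ?_⟩
  · rw [← Measure.compProd_map measurable_fst, ← Kernel.fst_eq, Kernel.fst_prod,
      ρ.disintegrate ρ.condKernel]
  · rw [← Measure.compProd_map measurable_snd, ← Kernel.snd_eq, Kernel.snd_prod, h,
      ρ'.disintegrate ρ'.condKernel]

theorem W2sqProd_le_lintegral_add_dsq {d : ℕ} (ρ : Measure (Rd d × Rd d × Rd d))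
    [IsFiniteMeasure ρ] (γ : Measure (Rd d × Rd d)) :
    W2sqProd (ρ.map fun p => (p.1, p.2.2)) γ ≤
      ∫⁻ p, (‖p.1 - p.2.1‖₊ : ℝ≥0∞) ^ 2 ∂ρ + dsq (ρ.map fun p => (p.2.1, p.2.2)) γ := by
  simp only [dsq, ENNReal.add_iInf, le_iInf_iff]
  intro Θ hΘ₁ hΘ₂
  have hglue : (ρ.map fun p => ((p.2.1, p.2.2), p.1)).fst =
      (Θ.map fun p => ((p.1, p.2.1), p.2.2)).fst := by
    rw [Measure.fst, Measure.fst, Measure.map_map measurable_fst (by fun_prop),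
      Measure.map_map measurable_fst (by fun_prop)]
    exact hΘ₁.symm
  obtain ⟨π, hπρ, hπΘ⟩ := Measure.exists_gluing_of_fst_eq hglue
  let q : (Rd d × Rd d) × Rd d × Rd d → (Rd d × Rd d) × Rd d × Rd d :=
    fun p => ((p.2.1, p.1.2), (p.1.1, p.2.2))
  have hq : Measurable q := by fun_prop
  have hstart : (π.map q).map Prod.fst = ρ.map fun p => (p.1, p.2.2) := by
    calc (π.map q).map Prod.fst
        = (π.map (Prod.map id Prod.fst)).map fun r => (r.2, r.1.2) := by
          rw [Measure.map_map measurable_fst hq, Measure.map_map (by fun_prop) (by fun_prop)]; rfl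
      _ = ρ.map fun p => (p.1, p.2.2) := by
          rw [hπρ, Measure.map_map (by fun_prop) (by fun_prop)]; rfl
  have hend : (π.map q).map Prod.snd = γ := by
    calc (π.map q).map Prod.snd
        = (π.map (Prod.map id Prod.snd)).map fun r => (r.1.1, r.2) := by
          rw [Measure.map_map measurable_snd hq, Measure.map_map (by fun_prop) (by fun_prop)]; rfl
      _ = γ := by
          rw [hπΘ, Measure.map_map (by fun_prop) (by fun_prop)]; exact hΘ₂
  refine iInf_le_of_le (π.map q) (iInf_le_of_le hstart (iInf_le_of_le hend (le_of_eq ?_)))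
  calc ∫⁻ p, ((‖p.1.1 - p.2.1‖₊ : ℝ≥0∞) ^ 2 + (‖p.1.2 - p.2.2‖₊ : ℝ≥0∞) ^ 2) ∂π.map q
      = ∫⁻ p, (‖p.2.1 - p.1.1‖₊ : ℝ≥0∞) ^ 2 ∂π + ∫⁻ p, (‖p.1.2 - p.2.2‖₊ : ℝ≥0∞) ^ 2 ∂π := by
        rw [lintegral_map (by fun_prop) hq, ← lintegral_add_left (by fun_prop)]
    _ = ∫⁻ r, (‖r.2 - r.1.1‖₊ : ℝ≥0∞) ^ 2 ∂π.map (Prod.map id Prod.fst)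
          + ∫⁻ r, (‖r.1.2 - r.2‖₊ : ℝ≥0∞) ^ 2 ∂π.map (Prod.map id Prod.snd) := by
        rw [lintegral_map (by fun_prop) (by fun_prop), lintegral_map (by fun_prop) (by fun_prop)]
        rfl
    _ = ∫⁻ p, (‖p.1 - p.2.1‖₊ : ℝ≥0∞) ^ 2 ∂ρ + ∫⁻ p, (‖p.2.1 - p.2.2‖₊ : ℝ≥0∞) ^ 2 ∂Θ := by
        rw [hπρ, hπΘ, lintegral_map (by fun_prop) (by fun_prop),
          lintegral_map (by fun_prop) (by fun_prop)]

theorem continuous_p₁ {E F : Type*} [TopologicalSpace E] [TopologicalSpace F] :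
    Continuous (p₁ : Curves (E × F) → Curves E) :=
  (ContinuousMap.fst : C(E × F, E)).continuous_postcomp

theorem continuous_geodCurve {d : ℕ} : Continuous fun p : Rd d × Rd d => geodCurve p.1 p.2 := by
  refine ContinuousMap.continuous_of_continuous_uncurry _ ?_
  simp only [geodCurve, ContinuousMap.coe_mk]
  fun_prop

theorem IsGeodesicPath.lintegral_nnnorm_sub_sq {d : ℕ} {μ ν : Measure (Rd d)}
    {η : Measure (Curves (Rd d))} (hη : IsGeodesicPath μ ν η) :
    ∫⁻ c, (‖c 0 - c 1‖₊ : ℝ≥0∞) ^ 2 ∂η = W2sq μ ν := by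
  obtain ⟨g, -, -, hg, rfl⟩ := hη
  rw [lintegral_map (by fun_prop) continuous_geodCurve.measurable, ← hg]
  congr with p
  simp [geodCurve]

theorem W2sqProd_le_W2sq_add_dsq_of_isParallelTransport {d : ℕ} {μ ν : Measure (Rd d)}
    {η : Measure (Curves (Rd d))} {Ψ : Measure (Curves (Rd d × Rd d))}
    {γφ : Measure (Rd d × Rd d)} (hη : IsGeodesicPath μ ν η)
    (hΨ : IsParallelTransport γφ η Ψ) (γψ : Measure (Rd d × Rd d)) :
    W2sqProd γφ γψ ≤ W2sq μ ν + dsq (Ψ.map (ev 1)) γψ := by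
  obtain ⟨hΨprob, hΨconst, hΨη, hΨ₀⟩ := hΨ
  let f : Curves (Rd d × Rd d) → Rd d × Rd d × Rd d := fun ψ => ((ψ 0).1, (ψ 1).1, (ψ 0).2)
  have hf : Measurable f := by fun_prop
  have hstart : (Ψ.map f).map (fun p => (p.1, p.2.2)) = γφ := by
    rw [Measure.map_map (by fun_prop) hf, ← hΨ₀]
    rfl
  have hend : (Ψ.map f).map (fun p => (p.2.1, p.2.2)) = Ψ.map (ev 1) := by
    rw [Measure.map_map (by fun_prop) hf]
    refine Measure.map_congr ?_
    filter_upwards [hΨconst] with ψ hψ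
    change ((ψ 1).1, (ψ 0).2) = ψ 1
    rw [← hψ 1]
  have hcost : ∫⁻ p, (‖p.1 - p.2.1‖₊ : ℝ≥0∞) ^ 2 ∂Ψ.map f = W2sq μ ν := by
    rw [← hη.lintegral_nnnorm_sub_sq, ← hΨη, lintegral_map (by fun_prop) hf,
      lintegral_map (by fun_prop) continuous_p₁.measurable]
    rfl
  simpa only [hstart, hend, hcost] using W2sqProd_le_lintegral_add_dsq (Ψ.map f) γψ

theorem stmt10_general {d : ℕ} (μ ν : Measure (Rd d))
    (γφ γψ : Measure (Rd d × Rd d)) :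
    W2sqProd γφ γψ ≤ W2sq μ ν + Ecal μ ν γφ γψ := by
  simp only [Ecal, ENNReal.add_iInf, le_iInf_iff]
  intro η hη Ψ hΨ
  exact W2sqProd_le_W2sq_add_dsq_of_isParallelTransport hη hΨ γψ

theorem stmt10 {d : ℕ} (μ ν : Measure (Rd d))
    [IsProbabilityMeasure μ] [IsProbabilityMeasure ν] (hμ : FinSM μ) (hν : FinSM ν)
    (γφ γψ : Measure (Rd d × Rd d)) (hφ : IsTangent μ γφ) (hψ : IsTangent ν γψ) :
    W2sqProd γφ γψ ≤ W2sq μ ν + Ecal μ ν γφ γψ :=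
  stmt10_general μ ν γφ γψ

end
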